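/- arXiv:1810.05230 — 2 statements merged into one kernel-verified Lean document; each statement's English description precedes it below -/
import Mathlib

section
/- Let J be as given and let J' be the splitting of J at a vertex (μ, eν) ∈ J all of whose outgoing edges in the coding graph E_J are positive. Then the number of negative edges of E_{J'} is at most the number of negative edges of E_J. -/
/-!
A negative edge `a → b` of `E_{J'}` makes `b.1` a proper prefix of the tail of `a.2`. If `a` were
a new vertex `(μf, eνf)`, `b.1` would be a prefix of `ν`, so `(μ, eν) → b` would be a non-positive
edge of `E_J` when `b` is old, and `(μ, eν) → (μ, eν)` a negative one when `b = (μg, eνg)` is new.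
Hence every negative edge of `E_{J'}` is one of `E_J` or has the form `a → (μf, eνf)` with `a` old.
Redirecting the latter to `a → (μ, eν)`, still negative, is injective: `μf` is the prefix of length
`|μ| + 1` of the tail of `a.2`.
-/

/-- A finite directed multigraph. -/
structure FinGraph where
  V : Type
  E : Type
  fintV : Fintype V
  fintE : Fintype E
  src : E → V
  rng : E → V

variable {G : FinGraph}

/-- A finite path in the graph `G`: a source vertex together with a compatible
list of edges (a vertex is a path of length 0). -/
structure FPath (G : FinGraph) where
  source : G.V
  edges : List G.E
  head_src : ∀ e ∈ edges.head?, G.src e = source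
  chain : edges.Chain' fun e f => G.rng e = G.src f

/-- The range (terminal vertex) of a finite path. -/
def FPath.range (p : FPath G) : G.V :=
  p.edges.getLast?.elim p.source G.rng

/-- The length-0 path at a vertex. -/
def FPath.nil (G : FinGraph) (v : G.V) : FPath G :=
  ⟨v, [], by simp, List.isChain_nil⟩

/-- `p.Prefix q` : the path `p` is an initial segment of the path `q`. -/
def FPath.Prefix (p q : FPath G) : Prop :=
  p.source = q.source ∧ p.edges <+: q.edges

/-- The path obtained by removing the first edge (the tail `κ` of `ν = eκ`). -/
def FPath.tail (p : FPath G) : FPath G where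
  source := p.edges.head?.elim p.source G.rng
  edges := p.edges.tail
  head_src := by
    cases hp : p.edges with
    | nil => simp
    | cons a l =>
      have h := p.chain
      rw [hp, List.Chain', List.isChain_cons] at h
      intro e he
      simp only [hp, List.head?_cons, Option.elim, List.tail_cons] at he ⊢
      exact (h.1 e he).symm
  chain := p.chain.tail

/-- An infinite path in the graph `G`. -/
structure IPath (G : FinGraph) where
  edges : ℕ → G.E
  chain : ∀ i, G.rng (edges i) = G.src (edges (i + 1))

/-- The source vertex of an infinite path. -/
def IPath.source (p : IPath G) : G.V := G.src (p.edges 0)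

/-- The cylinder set `Z(p)` of a finite path `p`: all infinite paths with prefix `p`. -/
def cylinder (p : FPath G) : Set (IPath G) :=
  {q | q.source = p.source ∧ ∀ i, (h : i < p.edges.length) → q.edges i = p.edges.get ⟨i, h⟩}

/-- A finite collection `S` of finite paths is a partition of the path `ν`:
the cylinder sets are pairwise disjoint with union `Z(ν)`. -/
def IsPartitionOfPath (S : Set (FPath G)) (ν : FPath G) : Prop :=
  S.Finite ∧ (∀ p ∈ S, ∀ q ∈ S, p ≠ q → cylinder p ∩ cylinder q = ∅) ∧
    (⋃ p ∈ S, cylinder p) = cylinder ν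

/-- A finite collection `S` of finite paths is a partition of the vertex `v`. -/
def IsPartitionOf (S : Set (FPath G)) (v : G.V) : Prop :=
  IsPartitionOfPath S (FPath.nil G v)

/-- Standing assumptions: no sinks, no sources, every cycle has an exit. -/
structure Standing (G : FinGraph) : Prop where
  no_sinks : ∀ v : G.V, ∃ e, G.src e = v
  no_sources : ∀ v : G.V, ∃ e, G.rng e = v
  cycles_exit : ∀ p : FPath G, p.edges ≠ [] → p.range = p.source →
    ∃ e ∈ p.edges, ∃ f, f ≠ e ∧ G.src f = G.src e

/-- The combinatorial conditions making `u_J = Σ_{(μ,ν) ∈ J} S_μ S_ν^*` a unitary: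
`J` is finite, `s(μ) = s(ν)`, `r(μ) = r(ν)`, `|ν| ≥ 1` for all `(μ,ν) ∈ J`, and both
families of cylinder sets are pairwise disjoint with union all of `E^∞`. -/
structure IsUnitaryJ (G : FinGraph) (J : Set (FPath G × FPath G)) : Prop where
  finite : J.Finite
  src_eq : ∀ p ∈ J, (Prod.fst p).source = (Prod.snd p).source
  rng_eq : ∀ p ∈ J, FPath.range (Prod.fst p) = FPath.range (Prod.snd p)
  ne_nil : ∀ p ∈ J, (Prod.snd p).edges ≠ []
  disj₁ : ∀ p ∈ J, ∀ q ∈ J, p ≠ q → cylinder (Prod.fst p) ∩ cylinder (Prod.fst q) = ∅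
  union₁ : (⋃ p ∈ J, cylinder (Prod.fst p)) = Set.univ
  disj₂ : ∀ p ∈ J, ∀ q ∈ J, p ≠ q → cylinder (Prod.snd p) ∩ cylinder (Prod.snd q) = ∅
  union₂ : (⋃ p ∈ J, cylinder (Prod.snd p)) = Set.univ

/-- Adjacency in the coding graph `E_J`: there is an edge from `p = (μ₁, e₁ν₁)` to
`q = (μ₂, e₂ν₂)` iff the tail `ν₁` and `μ₂` are prefix-comparable
(the combinatorial content of `S_{ν₁}^* S_{μ₂} ≠ 0`). -/
def CGAdj (p q : FPath G × FPath G) : Prop :=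
  FPath.Prefix p.2.tail q.1 ∨ FPath.Prefix q.1 p.2.tail

/-- The degree `|μ₂| − |ν₁|` of the coding-graph edge from `p` to `q`. -/
def cgDeg (p q : FPath G × FPath G) : ℤ :=
  (q.1.edges.length : ℤ) - (p.2.tail.edges.length : ℤ)

/-- `IsAppend p q r` : the path `r` is the concatenation `p q`. -/
def IsAppend (p q r : FPath G) : Prop :=
  r.source = p.source ∧ q.source = p.range ∧ r.edges = p.edges ++ q.edges

/-- A finite path in the coding graph `E_J`, recorded by the (nonempty) list of
vertices of `J` it visits (a single vertex is a path of length 0). -/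
structure CGPath (G : FinGraph) (J : Set (FPath G × FPath G)) where
  verts : List (FPath G × FPath G)
  ne : verts ≠ []
  mem : ∀ v ∈ verts, v ∈ J
  adj : verts.Chain' CGAdj

/-- The `E`-label of a path in the coding graph: the list of distinguished first
edges `e` of the second coordinates of the vertices it visits. -/
def CGPath.elabel {J : Set (FPath G × FPath G)} (ω : CGPath G J) : List G.E :=
  ω.verts.filterMap fun v => v.2.edges.head?

/-- `IsLabelOf l γ` : `γ` is the `L_J`-label of the coding-graph path visiting the
vertices in the list `l` (all of whose edges are non-negative): the concatenation of
the `L_J`-labels of its edges, and the empty path at `r(μ)` for the length-0 path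
at a vertex `(μ, eν)`. -/
inductive IsLabelOf : List (FPath G × FPath G) → FPath G → Prop
  | single (p : FPath G × FPath G) (γ : FPath G) :
      γ.edges = [] → γ.source = FPath.range p.1 → IsLabelOf [p] γ
  | cons (p q : FPath G × FPath G) (rest : List (FPath G × FPath G)) (α γ δ : FPath G) :
      IsAppend p.2.tail α q.1 → IsLabelOf (q :: rest) γ → IsAppend α γ δ →
      IsLabelOf (p :: q :: rest) δ

/-- Every edge of the coding graph `E_J` is non-negative. -/
def AllEdgesNonneg (G : FinGraph) (J : Set (FPath G × FPath G)) : Prop :=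
  ∀ p ∈ J, ∀ q ∈ J, CGAdj p q → 0 ≤ cgDeg p q

/-- The coding graph `E_J` contains a non-positive cycle. -/
def HasNonposCycle (G : FinGraph) (J : Set (FPath G × FPath G)) : Prop :=
  ∃ ω : CGPath G J, 2 ≤ ω.verts.length ∧ ω.verts.getLast ω.ne = ω.verts.head ω.ne ∧
    ω.verts.Chain' fun p q => cgDeg p q ≤ 0

/-- All outgoing edges of the vertex `p` in the coding graph `E_J` are positive. -/
def AllOutPositive (G : FinGraph) (J : Set (FPath G × FPath G))
    (p : FPath G × FPath G) : Prop :=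
  ∀ q ∈ J, CGAdj p q → 0 < cgDeg p q

/-- `IsSnoc p f q` : the path `q` is `p` extended by the single edge `f`. -/
def IsSnoc (p : FPath G) (f : G.E) (q : FPath G) : Prop :=
  q.source = p.source ∧ q.edges = p.edges ++ [f]

/-- `IsSplitting G J p J'` : `J'` is the splitting of `J` at the vertex `p = (μ, eν)`,
i.e. `J' = (J ∖ {(μ,eν)}) ∪ {(μf, eνf) : f ∈ E¹, s(f) = r(μ)}`. -/
def IsSplitting (G : FinGraph) (J : Set (FPath G × FPath G)) (p : FPath G × FPath G)
    (J' : Set (FPath G × FPath G)) : Prop :=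
  p ∈ J ∧ ∀ q, q ∈ J' ↔ (q ∈ J ∧ q ≠ p) ∨
    ∃ f, G.src f = FPath.range p.1 ∧ IsSnoc p.1 f q.1 ∧ IsSnoc p.2 f q.2

/-- The set of negative edges of the coding graph `E_J`. -/
def negEdgeSet (G : FinGraph) (J : Set (FPath G × FPath G)) :
    Set ((FPath G × FPath G) × (FPath G × FPath G)) :=
  {e | e.1 ∈ J ∧ e.2 ∈ J ∧ CGAdj e.1 e.2 ∧ cgDeg e.1 e.2 < 0}

/-- `IsFinalNeg G J p q ω d` : the edge from `p` to `q` in `E_J` is a final negative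
edge with destination `d`, via the zero path `ω` from `q` to `d`; the height of the
edge is `ω.verts.length - 1`. -/
def IsFinalNeg (G : FinGraph) (J : Set (FPath G × FPath G))
    (p q : FPath G × FPath G) (ω : CGPath G J) (d : FPath G × FPath G) : Prop :=
  p ∈ J ∧ q ∈ J ∧ CGAdj p q ∧ cgDeg p q < 0 ∧
    ω.verts.head ω.ne = q ∧ ω.verts.getLast ω.ne = d ∧
    (ω.verts.Chain' fun a b => cgDeg a b = 0) ∧ AllOutPositive G J d

/-- `(E_J, E)` is left-synchronizing with delay `m` : any two paths of length `m`
(i.e. with `m+1` vertices) in `E_J` with the same `E`-label have the same source. -/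
def LeftSyncDelay (G : FinGraph) (J : Set (FPath G × FPath G)) (m : ℕ) : Prop :=
  ∀ ω ξ : CGPath G J, ω.verts.length = m + 1 → ξ.verts.length = m + 1 →
    ω.elabel = ξ.elabel → ω.verts.head ω.ne = ξ.verts.head ξ.ne

/-- An infinite path in the coding graph `E_J`. -/
structure CGIPath (G : FinGraph) (J : Set (FPath G × FPath G)) where
  verts : ℕ → FPath G × FPath G
  mem : ∀ i, verts i ∈ J
  adj : ∀ i, CGAdj (verts i) (verts (i + 1))

/-- The infinite `E`-label of an infinite coding-graph path is the infinite path `α`. -/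
def ELabelInf {J : Set (FPath G × FPath G)} (ω : CGIPath G J) (α : IPath G) : Prop :=
  ∀ i, (ω.verts i).2.edges.head? = some (α.edges i)

/-- A transducer with input alphabet `A`, output alphabet `B`, a finite state set,
an initial state and a transition function. -/
structure Transducer (A B : Type) where
  S : Type
  finS : Finite S
  init : S
  tr : S → A → S × List B

/-- The state sequence of a transducer on an infinite input word. -/
def Transducer.states {A B : Type} (T : Transducer A B) (α : ℕ → A) : ℕ → T.S
  | 0 => T.init
  | n + 1 => (T.tr (T.states α n) (α n)).1

/-- The `n`-th output block of a transducer on an infinite input word. -/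
def Transducer.outBlock {A B : Type} (T : Transducer A B) (α : ℕ → A) (n : ℕ) : List B :=
  (T.tr (T.states α n) (α n)).2

/-- The concatenation of the first `n` blocks of a sequence of finite words. -/
def joinUpTo {X : Type} (f : ℕ → List X) (n : ℕ) : List X :=
  ((List.range n).map f).flatten

/-- Two infinite concatenations of sequences of finite words are equal. -/
def StreamsEq {X : Type} (f g : ℕ → List X) : Prop :=
  (∀ n, ∃ m, joinUpTo f n <+: joinUpTo g m) ∧ ∀ n, ∃ m, joinUpTo g n <+: joinUpTo f m

/-- The type of edges of the coding graph `E_J`. -/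
def CGEdgeT (G : FinGraph) (J : Set (FPath G × FPath G)) : Type :=
  {e : (FPath G × FPath G) × (FPath G × FPath G) // e.1 ∈ J ∧ e.2 ∈ J ∧ CGAdj e.1 e.2}

/-- The sequence of edges of an infinite coding-graph path. -/
def CGIPath.edgeSeq {J : Set (FPath G × FPath G)} (ω : CGIPath G J) (i : ℕ) : CGEdgeT G J :=
  ⟨(ω.verts i, ω.verts (i + 1)), ω.mem i, ω.mem (i + 1), ω.adj i⟩

lemma FPath.ext {p q : FPath G} (hs : p.source = q.source) (he : p.edges = q.edges) :
    p = q := by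
  cases p; cases q; simp_all

lemma FPath.Prefix.trans {p q r : FPath G} (hpq : p.Prefix q) (hqr : q.Prefix r) :
    p.Prefix r :=
  ⟨hpq.1.trans hqr.1, hpq.2.trans hqr.2⟩

section Snoc

variable {p q r : FPath G} {f : G.E}

lemma IsSnoc.prefix (h : IsSnoc p f q) : p.Prefix q :=
  ⟨h.1.symm, h.2 ▸ List.prefix_append _ _⟩

lemma IsSnoc.length_edges (h : IsSnoc p f q) : q.edges.length = p.edges.length + 1 := by
  simp [h.2]

lemma IsSnoc.tail (h : IsSnoc p f q) (hp : p.edges ≠ []) : IsSnoc p.tail f q.tail := by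
  obtain ⟨hs, he⟩ := h
  obtain ⟨e, l, hel⟩ := List.exists_cons_of_ne_nil hp
  constructor <;> simp [FPath.tail, he, hel]

lemma FPath.Prefix.of_isSnoc (hr : r.Prefix q) (h : IsSnoc p f q)
    (hlen : r.edges.length ≤ p.edges.length) : r.Prefix p :=
  ⟨hr.1.trans h.1, List.prefix_of_prefix_length_le hr.2 h.prefix.2 hlen⟩

end Snoc

lemma CGAdj.prefix_of_cgDeg_nonpos {a b : FPath G × FPath G} (hadj : CGAdj a b)
    (hdeg : cgDeg a b ≤ 0) : b.1.Prefix a.2.tail := by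
  rcases hadj with h | h
  · have hlen : a.2.tail.edges.length = b.1.edges.length := by
      have := h.2.length_le
      unfold cgDeg at hdeg
      omega
    exact ⟨h.1.symm, h.2.eq_of_length hlen ▸ List.prefix_refl _⟩
  · exact h

lemma negEdgeSet_finite {J : Set (FPath G × FPath G)} (hJ : J.Finite) :
    (negEdgeSet G J).Finite :=
  (hJ.prod hJ).subset fun _ hx => ⟨hx.1, hx.2.1⟩

/-- `q = (μf, eνf)` for some edge `f`, where `p = (μ, eν)`. -/
def IsSplitChild (p q : FPath G × FPath G) : Prop :=
  ∃ f, IsSnoc p.1 f q.1 ∧ IsSnoc p.2 f q.2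

section SplitChild

variable {p a b b' : FPath G × FPath G}

lemma IsSplitChild.ne (h : IsSplitChild p b) : b ≠ p := by
  rintro rfl
  obtain ⟨f, hf, -⟩ := h
  simpa using hf.length_edges

lemma IsSplitChild.cgDeg_neg_of_nonpos (hb : IsSplitChild p b) (hadj : CGAdj a b)
    (hdeg : cgDeg a b ≤ 0) : CGAdj a p ∧ cgDeg a p < 0 := by
  obtain ⟨f, hf, -⟩ := hb
  refine ⟨Or.inr (hf.prefix.trans (hadj.prefix_of_cgDeg_nonpos hdeg)), ?_⟩
  have := hf.length_edges
  unfold cgDeg at hdeg ⊢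
  omega

lemma IsSplitChild.cgDeg_nonpos_of_neg (ha : IsSplitChild p a) (hν : p.2.edges ≠ [])
    (hadj : CGAdj a b) (hdeg : cgDeg a b < 0) : CGAdj p b ∧ cgDeg p b ≤ 0 := by
  obtain ⟨f, -, hf⟩ := ha
  have htail := hf.tail hν
  have hlen := htail.length_edges
  have hpre : b.1.Prefix p.2.tail :=
    (hadj.prefix_of_cgDeg_nonpos hdeg.le).of_isSnoc htail (by unfold cgDeg at hdeg; omega)
  have := hpre.2.length_le
  refine ⟨Or.inr hpre, ?_⟩
  unfold cgDeg
  omega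

lemma IsSplitChild.eq_of_cgDeg_nonpos (hb : IsSplitChild p b) (hb' : IsSplitChild p b')
    (hadj : CGAdj a b) (hdeg : cgDeg a b ≤ 0) (hadj' : CGAdj a b') (hdeg' : cgDeg a b' ≤ 0) :
    b = b' := by
  obtain ⟨f, hf₁, hf₂⟩ := hb
  obtain ⟨g, hg₁, hg₂⟩ := hb'
  have hlen : b.1.edges.length = b'.1.edges.length := by
    rw [hf₁.length_edges, hg₁.length_edges]
  have hedges : b.1.edges = b'.1.edges :=
    (List.prefix_of_prefix_length_le (hadj.prefix_of_cgDeg_nonpos hdeg).2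
      (hadj'.prefix_of_cgDeg_nonpos hdeg').2 hlen.le).eq_of_length hlen
  have hfg : f = g := by
    rw [hf₁.2, hg₁.2] at hedges
    simpa using hedges
  subst hfg
  exact Prod.ext (FPath.ext (hf₁.1.trans hg₁.1.symm) hedges)
    (FPath.ext (hf₂.1.trans hg₂.1.symm) (hf₂.2.trans hg₂.2.symm))

end SplitChild

/-- The negative edge `a → (μf, eνf)` of `E_{J'}` is sent to `a → (μ, eν)`. -/
noncomputable def redirectToParent (p : FPath G × FPath G)
    (x : (FPath G × FPath G) × (FPath G × FPath G)) :
    (FPath G × FPath G) × (FPath G × FPath G) :=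
  open Classical in if IsSplitChild p x.2 then (x.1, p) else x

namespace IsSplitting

variable {J J' : Set (FPath G × FPath G)} {p a b : FPath G × FPath G}

lemma mem_or (hsplit : IsSplitting G J p J') (hq : b ∈ J') :
    (b ∈ J ∧ b ≠ p) ∨ IsSplitChild p b :=
  ((hsplit.2 b).1 hq).imp_right fun ⟨f, _, hf⟩ => ⟨f, hf⟩

lemma not_mem (hsplit : IsSplitting G J p J') : p ∉ J' := fun hp =>
  (hsplit.mem_or hp).elim (fun h => h.2 rfl) (fun h => h.ne rfl)

lemma not_isSplitChild_of_cgDeg_neg (hsplit : IsSplitting G J p J')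
    (hout : AllOutPositive G J p) (hν : p.2.edges ≠ []) (hb : b ∈ J') (hadj : CGAdj a b)
    (hdeg : cgDeg a b < 0) : ¬IsSplitChild p a := by
  intro ha
  obtain ⟨hpb, hpb_deg⟩ := ha.cgDeg_nonpos_of_neg hν hadj hdeg
  rcases hsplit.mem_or hb with ⟨hbJ, -⟩ | hbc
  · exact (hout b hbJ hpb).not_ge hpb_deg
  · obtain ⟨hpp, hpp_deg⟩ := hbc.cgDeg_neg_of_nonpos hpb hpb_deg
    exact (hout p hsplit.1 hpp).not_gt hpp_deg

lemma mapsTo_negEdgeSet (hsplit : IsSplitting G J p J') (hout : AllOutPositive G J p)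
    (hν : p.2.edges ≠ []) :
    Set.MapsTo (redirectToParent p) (negEdgeSet G J') (negEdgeSet G J) := by
  rintro ⟨a, b⟩ ⟨ha, hb, hadj, hdeg⟩
  have haJ : a ∈ J := ((hsplit.mem_or ha).resolve_right
    (hsplit.not_isSplitChild_of_cgDeg_neg hout hν hb hadj hdeg)).1
  by_cases hbc : IsSplitChild p b
  · obtain ⟨hap, hap_deg⟩ := hbc.cgDeg_neg_of_nonpos hadj hdeg.le
    simp only [redirectToParent, if_pos hbc]
    exact ⟨haJ, hsplit.1, hap, hap_deg⟩
  · simp only [redirectToParent, if_neg hbc]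
    exact ⟨haJ, ((hsplit.mem_or hb).resolve_right hbc).1, hadj, hdeg⟩

lemma injOn_redirectToParent (hsplit : IsSplitting G J p J') :
    Set.InjOn (redirectToParent p) (negEdgeSet G J') := by
  rintro ⟨a, b⟩ ⟨-, hb, hadj, hdeg⟩ ⟨a', b'⟩ ⟨-, hb', hadj', hdeg'⟩ heq
  by_cases hbc : IsSplitChild p b <;> by_cases hbc' : IsSplitChild p b' <;>
    simp only [redirectToParent, hbc, hbc', if_true, if_false, Prod.mk.injEq] at heq
  · obtain ⟨rfl, -⟩ := heq
    rw [hbc.eq_of_cgDeg_nonpos hbc' hadj hdeg.le hadj' hdeg'.le]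
  · exact absurd (heq.2 ▸ hb') hsplit.not_mem
  · exact absurd (heq.2 ▸ hb) hsplit.not_mem
  · rw [heq.1, heq.2]

end IsSplitting

theorem splitting_neg_edges_le_general (G : FinGraph)
    (J : Set (FPath G × FPath G)) (hJ : IsUnitaryJ G J)
    (p : FPath G × FPath G) (hout : AllOutPositive G J p)
    (J' : Set (FPath G × FPath G)) (hsplit : IsSplitting G J p J') :
    (negEdgeSet G J').ncard ≤ (negEdgeSet G J).ncard :=
  Set.ncard_le_ncard_of_injOn (redirectToParent p)
    (hsplit.mapsTo_negEdgeSet hout (hJ.ne_nil p hsplit.1)) hsplit.injOn_redirectToParent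
    (negEdgeSet_finite hJ.finite)

/-- splitting at a vertex all of whose outgoing edges are positive does not
increase the number of negative edges of the coding graph. -/
theorem splitting_neg_edges_le (G : FinGraph) (hG : Standing G)
    (J : Set (FPath G × FPath G)) (hJ : IsUnitaryJ G J)
    (p : FPath G × FPath G) (hp : p ∈ J) (hout : AllOutPositive G J p)
    (J' : Set (FPath G × FPath G)) (hsplit : IsSplitting G J p J') :
    (negEdgeSet G J').ncard ≤ (negEdgeSet G J).ncard :=
  splitting_neg_edges_le_general G J hJ p hout J' hsplit
end

section
/- Let J be as given and suppose that every edge of the coding graph E_J is non-negative. Then E_J is left-resolving in the E-label: if ω and ξ are edges of E_J with the same range vertex, r(ω) = r(ξ), and whose source vertices (μ_1, fν_1) and (μ_2, fν_2) carry the same distinguished first edge f (equivalently, E(ω) = E(ξ)), then ω = ξ (in particular the source vertices coincide). -/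
variable {G : FinGraph}

/-! Both tails `ν₁`, `ν₂` are prefixes of `μ` (`q = (μ, eν)`) since the edges are non-negative,
so they are prefix-comparable, and hence so are `fν₁` and `fν₂`. Without sinks every cylinder
is nonempty, so `Z(fν₁) ∩ Z(fν₂) ≠ ∅`, and disjointness of the `Z(ν)` forces `p₁ = p₂`. -/

namespace IPath

def cons (e : G.E) (q : IPath G) (h : G.rng e = q.source) : IPath G where
  edges
    | 0 => e
    | i + 1 => q.edges i
  chain
    | 0 => h
    | i + 1 => q.chain i

noncomputable def ofNoSinks (hG : ∀ v : G.V, ∃ e, G.src e = v) (v : G.V) : IPath G :=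
  let vertexSeq : ℕ → G.V := fun k => Nat.rec v (fun _ w => G.rng (hG w).choose) k
  { edges := fun k => (hG (vertexSeq k)).choose
    chain := fun k => ((hG (vertexSeq (k + 1))).choose_spec).symm }

theorem ofNoSinks_source (hG : ∀ v : G.V, ∃ e, G.src e = v) (v : G.V) :
    (ofNoSinks hG v).source = v :=
  (hG v).choose_spec

end IPath

theorem cylinder_nonempty (hG : ∀ v : G.V, ∃ e, G.src e = v) (p : FPath G) :
    (cylinder p).Nonempty := by
  suffices ∀ l : List G.E, ∀ p : FPath G, p.edges = l → (cylinder p).Nonempty from this _ p rfl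
  intro l
  induction l with
  | nil =>
    intro p hp
    exact ⟨IPath.ofNoSinks hG p.source, IPath.ofNoSinks_source hG _, by simp [hp]⟩
  | cons e l ih =>
    intro p hp
    obtain ⟨q, hq_src, hq_edges⟩ := ih p.tail (by simp [FPath.tail, hp])
    have hq : G.rng e = q.source := by simp [hq_src, FPath.tail, hp]
    refine ⟨IPath.cons e q hq, p.head_src e (by simp [hp]), fun i hi => ?_⟩
    cases i with
    | zero => simp [IPath.cons, hp]
    | succ i =>
      have hi' : i < p.tail.edges.length := by simp_all [FPath.tail]
      simpa [IPath.cons, FPath.tail, hp] using hq_edges i hi'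

theorem FPath.Prefix.cylinder_subset {p q : FPath G} (h : p.Prefix q) :
    cylinder q ⊆ cylinder p := by
  rintro x ⟨hx_src, hx_edges⟩
  refine ⟨hx_src.trans h.1.symm, fun i hi => ?_⟩
  rw [hx_edges i (hi.trans_le h.2.length_le)]
  exact (h.2.getElem hi).symm

theorem FPath.Prefix.prefix_or_prefix {p₁ p₂ q : FPath G} (h₁ : p₁.Prefix q) (h₂ : p₂.Prefix q) :
    p₁.Prefix p₂ ∨ p₂.Prefix p₁ :=
  (List.prefix_or_prefix_of_prefix h₁.2 h₂.2).imp
    (fun h => ⟨h₁.1.trans h₂.1.symm, h⟩) (fun h => ⟨h₂.1.trans h₁.1.symm, h⟩)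

theorem FPath.prefix_of_tail_prefix {p q : FPath G} {f : G.E}
    (hp : p.edges.head? = some f) (hq : q.edges.head? = some f) (h : p.tail.Prefix q.tail) :
    p.Prefix q := by
  refine ⟨(p.head_src f hp).symm.trans (q.head_src f hq), ?_⟩
  rw [← List.cons_head?_tail hp, ← List.cons_head?_tail hq]
  exact List.cons_prefix_cons.mpr ⟨rfl, h.2⟩

theorem CGAdj.tail_prefix_of_nonneg {p q : FPath G × FPath G} (h : CGAdj p q)
    (hd : 0 ≤ cgDeg p q) : p.2.tail.Prefix q.1 := by
  rcases h with h | ⟨hs, hpre⟩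
  · exact h
  · have hlen : p.2.tail.edges.length ≤ q.1.edges.length := by
      unfold cgDeg at hd
      omega
    exact ⟨hs.symm, (hpre.eq_of_length_le hlen) ▸ List.prefix_refl _⟩

/-- Lemma 5.2: if every edge of `E_J` is non-negative, then `E_J` is
left-resolving in the `E`-label: two edges with the same range and whose source
vertices carry the same distinguished first edge coincide. -/
theorem left_resolving (G : FinGraph) (hG : Standing G)
    (J : Set (FPath G × FPath G)) (hJ : IsUnitaryJ G J)
    (hnn : AllEdgesNonneg G J)
    (p₁ p₂ q : FPath G × FPath G) (h₁ : p₁ ∈ J) (h₂ : p₂ ∈ J) (hq : q ∈ J)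
    (e₁ : CGAdj p₁ q) (e₂ : CGAdj p₂ q)
    (hf : p₁.2.edges.head? = p₂.2.edges.head?) :
    p₁ = p₂ := by
  by_contra hne
  obtain ⟨f, hf₁⟩ :=
    Option.ne_none_iff_exists'.mp (List.head?_eq_none_iff.not.mpr (hJ.ne_nil p₁ h₁))
  have hf₂ : p₂.2.edges.head? = some f := hf ▸ hf₁
  have hcomp : p₁.2.Prefix p₂.2 ∨ p₂.2.Prefix p₁.2 :=
    ((e₁.tail_prefix_of_nonneg (hnn p₁ h₁ q hq e₁)).prefix_or_prefix
      (e₂.tail_prefix_of_nonneg (hnn p₂ h₂ q hq e₂))).imp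
      (FPath.prefix_of_tail_prefix hf₁ hf₂) (FPath.prefix_of_tail_prefix hf₂ hf₁)
  have hmeet : (cylinder p₁.2 ∩ cylinder p₂.2).Nonempty := by
    rcases hcomp with h | h
    · exact (cylinder_nonempty hG.no_sinks p₂.2).mono fun x hx =>
        ⟨h.cylinder_subset hx, hx⟩
    · exact (cylinder_nonempty hG.no_sinks p₁.2).mono fun x hx =>
        ⟨hx, h.cylinder_subset hx⟩
  exact hmeet.ne_empty (hJ.disj₂ p₁ h₁ p₂ h₂ hne)
end
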